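/- arXiv:1512.04644 — 2 statements merged into one kernel-verified Lean document; each statement's English description precedes it below -/
import Mathlib

section
/- (Extreme cut, second form.) For all reals v_i, v_j, θ with vl_i ≤ v_i ≤ vu_i, vl_j ≤ v_j ≤ vu_j and θl ≤ θ ≤ θu, setting w_j = v_j², wR = v_i·v_j·cos θ and wI = v_i·v_j·sin θ, the following inequality holds: vl_i·cos δ·w_j − vσ_j·cos φ·wR − vσ_j·sin φ·wI + vl_j·vu_j·vl_i·cos δ ≤ 0. -/
/-! Writing `wR`, `wI` in polar form, the two angle terms combine to `vσ_j v_i v_j cos (θ - φ)`, and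
`|θ - φ| ≤ δ ≤ π/2` gives `0 ≤ cos δ ≤ cos (θ - φ)`. Since `v_j` lies between `vl_j` and `vu_j`,
`v_j² + vl_j vu_j ≤ vσ_j v_j`; with `vl_i ≤ v_i` the cut follows. -/

open Real

lemma Real.cos_le_cos_of_abs_le {x d : ℝ} (hx : |x| ≤ d) (hd : d ≤ π) : cos d ≤ cos x := by
  rw [← cos_abs x]
  exact cos_le_cos_of_nonneg_of_le_pi (abs_nonneg x) hd hx

lemma cos_mul_add_sin_mul_eq_mul_cos_sub (r φ θ : ℝ) :
    cos φ * (r * cos θ) + sin φ * (r * sin θ) = r * cos (θ - φ) := by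
  rw [cos_sub]; ring

lemma sq_add_mul_le_add_mul {a b x : ℝ} (hax : a ≤ x) (hxb : x ≤ b) :
    x ^ 2 + a * b ≤ (a + b) * x := by
  nlinarith [mul_nonneg (sub_nonneg.2 hax) (sub_nonneg.2 hxb)]

lemma extreme_cut_bound {vli vi vlj vuj vj c C : ℝ} (hvli : 0 ≤ vli) (hvi : vli ≤ vi)
    (hvlj : 0 ≤ vlj) (hvj₁ : vlj ≤ vj) (hvj₂ : vj ≤ vuj) (hc : 0 ≤ c) (hcC : c ≤ C) :
    vli * c * vj ^ 2 + vlj * vuj * vli * c ≤ (vlj + vuj) * vi * vj * C := by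
  have hσvj : 0 ≤ (vlj + vuj) * vj := mul_nonneg (by linarith) (hvlj.trans hvj₁)
  calc vli * c * vj ^ 2 + vlj * vuj * vli * c = vli * c * (vj ^ 2 + vlj * vuj) := by ring
    _ ≤ vli * c * ((vlj + vuj) * vj) :=
        mul_le_mul_of_nonneg_left (sq_add_mul_le_add_mul hvj₁ hvj₂) (mul_nonneg hvli hc)
    _ = (vlj + vuj) * vj * (vli * c) := by ring
    _ ≤ (vlj + vuj) * vj * (vi * C) :=
        mul_le_mul_of_nonneg_left (mul_le_mul hvi hcC hc (hvli.trans hvi)) hσvj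
    _ = (vlj + vuj) * vi * vj * C := by ring

theorem extreme_cut_second_form_valid_general
    (vli vui vlj vuj θl θu φ δ vσj : ℝ)
    (hvli : 0 < vli) (hvlj : 0 < vlj)
    (hθl : -(Real.pi / 2) ≤ θl) (hθu : θu ≤ Real.pi / 2)
    (hφ : φ = (θu + θl) / 2) (hδ : δ = (θu - θl) / 2) (hσj : vσj = vlj + vuj) :
    ∀ vi vj θ : ℝ, vli ≤ vi → vi ≤ vui → vlj ≤ vj → vj ≤ vuj → θl ≤ θ → θ ≤ θu →
      vli * Real.cos δ * vj ^ 2 - vσj * Real.cos φ * (vi * vj * Real.cos θ)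
        - vσj * Real.sin φ * (vi * vj * Real.sin θ) + vlj * vuj * vli * Real.cos δ ≤ 0 := by
  intro vi vj θ hvi _ hvj₁ hvj₂ hθ₁ hθ₂
  subst hφ hδ hσj
  have hcos_nonneg : 0 ≤ cos ((θu - θl) / 2) :=
    cos_nonneg_of_mem_Icc ⟨by linarith, by linarith⟩
  have hcos_le : cos ((θu - θl) / 2) ≤ cos (θ - (θu + θl) / 2) :=
    cos_le_cos_of_abs_le (abs_le.2 ⟨by linarith, by linarith⟩) (by linarith [pi_pos])
  have hpolar := cos_mul_add_sin_mul_eq_mul_cos_sub (vi * vj) ((θu + θl) / 2) θ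
  have := extreme_cut_bound hvli.le hvi hvlj.le hvj₁ hvj₂ hcos_nonneg hcos_le
  linear_combination this - (vlj + vuj) * hpolar

theorem extreme_cut_second_form_valid
    (vli vui vlj vuj θl θu φ δ vσj : ℝ)
    (hvli : 0 < vli) (hvi : vli ≤ vui) (hvlj : 0 < vlj) (hvj : vlj ≤ vuj)
    (hθl : -(Real.pi / 2) ≤ θl) (hθ : θl ≤ θu) (hθu : θu ≤ Real.pi / 2)
    (hφ : φ = (θu + θl) / 2) (hδ : δ = (θu - θl) / 2) (hσj : vσj = vlj + vuj) :
    ∀ vi vj θ : ℝ, vli ≤ vi → vi ≤ vui → vlj ≤ vj → vj ≤ vuj → θl ≤ θ → θ ≤ θu →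
      vli * Real.cos δ * vj ^ 2 - vσj * Real.cos φ * (vi * vj * Real.cos θ)
        - vσj * Real.sin φ * (vi * vj * Real.sin θ) + vlj * vuj * vli * Real.cos δ ≤ 0 :=
  extreme_cut_second_form_valid_general vli vui vlj vuj θl θu φ δ vσj hvli hvlj hθl hθu hφ hδ hσj
end

section
/- (LNC dominates the second Extreme cut.) Let wR, wI, w_i, w_j be arbitrary real numbers satisfying w_i ≥ (vl_i)² and the lifted nonlinear cut vσ_i·vσ_j·(wR·cos φ + wI·sin φ) − vl_j·cos δ·vσ_j·w_i − vl_i·cos δ·vσ_i·w_j ≥ −vl_i·vl_j·cos δ·(vl_i·vl_j − vu_i·vu_j). Then the second Extreme cut vl_i·cos δ·w_j − vσ_j·cos φ·wR − vσ_j·sin φ·wI + vl_j·vu_j·vl_i·cos δ ≤ 0 also holds. -/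
/-!
Multiplied by `vσ_i > 0`, the Extreme cut becomes the negated LNC slack minus
`vl_j · cos δ · vσ_j · (w_i − vl_i²)`, an exact polynomial identity once `vσ_i` and `vσ_j`
are expanded. Both terms are nonpositive: the first by the LNC, the second because
`w_i ≥ vl_i²` and `cos δ ≥ 0` for `δ ∈ [0, π/2]`.
-/

open Real

theorem second_extreme_cut_of_lnc {vli vui vlj vuj c z wi wj : ℝ}
    (hσi : 0 < vli + vui) (hvlj : 0 ≤ vlj) (hσj : 0 ≤ vlj + vuj) (hc : 0 ≤ c)
    (hwi : vli ^ 2 ≤ wi)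
    (hlnc : -(vli * vlj * c * (vli * vlj - vui * vuj)) ≤
      (vli + vui) * (vlj + vuj) * z - vlj * c * (vlj + vuj) * wi - vli * c * (vli + vui) * wj) :
    vli * c * wj - (vlj + vuj) * z + vlj * vuj * vli * c ≤ 0 := by
  have hslack : 0 ≤ vlj * c * (vlj + vuj) * (wi - vli ^ 2) := by
    have := sub_nonneg.mpr hwi
    positivity
  have hscaled : (vli * c * wj - (vlj + vuj) * z + vlj * vuj * vli * c) * (vli + vui) ≤ 0 := by
    linear_combination hlnc + hslack
  exact nonpos_of_mul_nonpos_left hscaled hσi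

theorem cos_half_sub_nonneg {θl θu : ℝ} (hθ : θl ≤ θu) (hθπ : θu - θl ≤ π) :
    0 ≤ cos ((θu - θl) / 2) :=
  cos_nonneg_of_neg_pi_div_two_le_of_le (by linarith [pi_pos]) (by linarith)

theorem lnc_dominates_second_extreme_cut_general
    (vli vui vlj vuj θl θu φ δ vσi vσj : ℝ)
    (hvli : 0 < vli) (hvi : vli ≤ vui) (hvlj : 0 < vlj) (hvj : vlj ≤ vuj)
    (hθl : -(Real.pi / 2) ≤ θl) (hθ : θl ≤ θu) (hθu : θu ≤ Real.pi / 2)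
    (hδ : δ = (θu - θl) / 2)
    (hσi : vσi = vli + vui) (hσj : vσj = vlj + vuj)
    (wR wI wi wj : ℝ)
    (hwi : wi ≥ vli ^ 2)
    (hlnc : vσi * vσj * (wR * Real.cos φ + wI * Real.sin φ)
      - vlj * Real.cos δ * vσj * wi - vli * Real.cos δ * vσi * wj
      ≥ -(vli * vlj * Real.cos δ * (vli * vlj - vui * vuj))) :
    vli * Real.cos δ * wj - vσj * Real.cos φ * wR - vσj * Real.sin φ * wI
      + vlj * vuj * vli * Real.cos δ ≤ 0 := by
  subst hσi hσj hδ
  have hcos := cos_half_sub_nonneg hθ (by linarith)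
  have := second_extreme_cut_of_lnc (by linarith) hvlj.le (by linarith) hcos hwi hlnc
  linear_combination this

theorem lnc_dominates_second_extreme_cut
    (vli vui vlj vuj θl θu φ δ vσi vσj : ℝ)
    (hvli : 0 < vli) (hvi : vli ≤ vui) (hvlj : 0 < vlj) (hvj : vlj ≤ vuj)
    (hθl : -(Real.pi / 2) ≤ θl) (hθ : θl ≤ θu) (hθu : θu ≤ Real.pi / 2)
    (hφ : φ = (θu + θl) / 2) (hδ : δ = (θu - θl) / 2)
    (hσi : vσi = vli + vui) (hσj : vσj = vlj + vuj)
    (wR wI wi wj : ℝ)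
    (hwi : wi ≥ vli ^ 2)
    (hlnc : vσi * vσj * (wR * Real.cos φ + wI * Real.sin φ)
      - vlj * Real.cos δ * vσj * wi - vli * Real.cos δ * vσi * wj
      ≥ -(vli * vlj * Real.cos δ * (vli * vlj - vui * vuj))) :
    vli * Real.cos δ * wj - vσj * Real.cos φ * wR - vσj * Real.sin φ * wI
      + vlj * vuj * vli * Real.cos δ ≤ 0 :=
  lnc_dominates_second_extreme_cut_general vli vui vlj vuj θl θu φ δ vσi vσj hvli hvi hvlj hvj hθl
    hθ hθu hδ hσi hσj wR wI wi wj hwi hlnc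
end
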